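/- arXiv:1606.00112 — 3 statements merged into one kernel-verified Lean document; each statement's English description precedes it below -/
import Mathlib

section
/- (Spiral search tail bound.) Let q ∈ ℝ², let n ≥ 2, k ≥ 1, ε ∈ (0,1), ρ ≥ 1, and suppose every location probability satisfies w ≥ 1/(ρk). Let p be a possible location of uncertain point Pᵢ and suppose at least m' ≥ ρk·ln(1/ε) possible locations of other uncertain points Pⱼ (j ≠ i) are at distance at most dist(q,p) from q, with xⱼ of them belonging to Pⱼ and ∑_{j≠i} xⱼ = m'. Then the probability η(p;q) that p is realized and is the nearest neighbor of q satisfies η(p;q) ≤ w_p · ε, where w_p is the location probability of p. Concretely: if w_p ∈ (0,1] and for each j ≠ i, sⱼ ≥ xⱼ/(ρk) where sⱼ ∈ [0,1] is the total weight of Pⱼ's locations within distance dist(q,p), then w_p·∏_{j≠i}(1 − sⱼ) ≤ w_p·exp(−m'/(ρk)) ≤ w_p·ε. -/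
theorem spiral_search_tail_bound {ι : Type*} (t : Finset ι)
    (n k : ℕ) (hn : 2 ≤ n) (hk : 1 ≤ k)
    (ρ ε : ℝ) (hρ : 1 ≤ ρ) (hε : ε ∈ Set.Ioo (0:ℝ) 1)
    (w : ℝ) (hw : w ∈ Set.Ioc (0:ℝ) 1)
    (x : ι → ℕ) (s : ι → ℝ)
    (hs : ∀ j ∈ t, s j ∈ Set.Icc (0:ℝ) 1)
    (hxs : ∀ j ∈ t, (x j : ℝ) / (ρ * k) ≤ s j)
    (m' : ℕ) (hm' : (∑ j ∈ t, x j) = m')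
    (hm'big : ρ * k * Real.log (1 / ε) ≤ m') :
    w * ∏ j ∈ t, (1 - s j) ≤ w * Real.exp (-(m' : ℝ) / (ρ * k)) ∧
    w * Real.exp (-(m' : ℝ) / (ρ * k)) ≤ w * ε := by
  have hk0 : (0:ℝ) < k := by exact_mod_cast hk
  have hρk : (0:ℝ) < ρ * k := by positivity
  have hw0 : 0 ≤ w := le_of_lt hw.1
  constructor
  · apply mul_le_mul_of_nonneg_left _ hw0
    calc ∏ j ∈ t, (1 - s j)
        ≤ ∏ j ∈ t, Real.exp (-((x j : ℝ) / (ρ * k))) := by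
          apply Finset.prod_le_prod
          · intro j hj; linarith [(hs j hj).2]
          · intro j hj
            calc 1 - s j ≤ 1 - (x j : ℝ) / (ρ * k) := by linarith [hxs j hj]
              _ ≤ Real.exp (-((x j : ℝ) / (ρ * k))) := by
                  have := Real.add_one_le_exp (-((x j : ℝ) / (ρ * k)))
                  linarith
      _ = Real.exp (-(m' : ℝ) / (ρ * k)) := by
          rw [← Real.exp_sum]
          congr 1
          rw [← hm']
          push_cast
          simp [neg_div, Finset.sum_div, Finset.sum_neg_distrib]
  · apply mul_le_mul_of_nonneg_left _ hw0
    rw [← Real.exp_log hε.1]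
    apply Real.exp_le_exp.2
    rw [div_le_iff₀ hρk]
    have hlog : Real.log (1/ε) = - Real.log ε := by
      rw [one_div, Real.log_inv]
    rw [hlog] at hm'big
    nlinarith [hm'big]
end

section
/- (Lower bound witness computation, same-radius case.) Let D⁻ be the unit disk centered at (−2,0), D⁺ the unit disk centered at (2,0), and for θ ∈ (0, π/2) let D⁰ be the unit disk centered at (2 − 2cos θ, 2 sin θ). Then the disk W centered at (0, 2 tan θ) with radius 2/cos θ − 1 touches D⁻ and D⁺ from the outside and touches D⁰ from the inside. That is: dist((0, 2tanθ), (±2,0)) = 2/cosθ = (2/cosθ − 1) + 1, and dist((0,2tanθ), (2−2cosθ, 2sinθ)) = 2/cosθ − 2 = (2/cosθ − 1) − 1. -/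
open Real

noncomputable def pt (a b : ℝ) : EuclideanSpace ℝ (Fin 2) :=
  (WithLp.equiv 2 (Fin 2 → ℝ)).symm ![a, b]

theorem same_radius_witness (θ : ℝ) (hθ : θ ∈ Set.Ioo 0 (π / 2)) :
    dist (pt 0 (2 * tan θ)) (pt 2 0) = 2 / cos θ ∧
    dist (pt 0 (2 * tan θ)) (pt (-2) 0) = 2 / cos θ ∧
    dist (pt 0 (2 * tan θ)) (pt (2 - 2 * cos θ) (2 * sin θ)) = 2 / cos θ - 2 := by
  obtain ⟨h1, h2⟩ := hθ
  have hc : 0 < cos θ := cos_pos_of_mem_Ioo ⟨by linarith [pi_pos], h2⟩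
  have hc1 : cos θ ≤ 1 := cos_le_one θ
  have hpyth : sin θ ^ 2 + cos θ ^ 2 = 1 := sin_sq_add_cos_sq θ
  have htan : tan θ = sin θ / cos θ := tan_eq_sin_div_cos θ
  have hd : ∀ a b c d : ℝ, dist (pt a b) (pt c d) = Real.sqrt ((a - c) ^ 2 + (b - d) ^ 2) := by
    intro a b c d
    rw [EuclideanSpace.dist_eq, Fin.sum_univ_two]
    simp [pt, Real.dist_eq, sq_abs]
  refine ⟨?_, ?_, ?_⟩
  · rw [hd]
    rw [show (0 - 2 : ℝ) ^ 2 + (2 * tan θ - 0) ^ 2 = (2 / cos θ) ^ 2 by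
      rw [htan]; field_simp; nlinarith]
    exact Real.sqrt_sq (by positivity)
  · rw [hd]
    rw [show (0 - (-2) : ℝ) ^ 2 + (2 * tan θ - 0) ^ 2 = (2 / cos θ) ^ 2 by
      rw [htan]; field_simp; nlinarith]
    exact Real.sqrt_sq (by positivity)
  · rw [hd]
    rw [show (0 - (2 - 2 * cos θ)) ^ 2 + (2 * tan θ - 2 * sin θ) ^ 2 = (2 / cos θ - 2) ^ 2 by
      rw [htan]; field_simp; nlinarith]
    refine Real.sqrt_sq ?_
    rw [le_sub_iff_add_le, zero_add, le_div_iff₀ hc]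
    linarith
end

section
/- (Quadratic lower bound witness.) Let n = 2m and let Dᵢ be the unit disk centered at cᵢ = (4(i−m)−2, 0) for 1 ≤ i ≤ 2m. For indices i < j with j − i ≥ 2 and i + j even, set k = (i+j)/2 and v = (2(i+j−2m−1), (j−i)² − 1). Then dist(v, cᵢ) − 1 = dist(v, cⱼ) − 1 = dist(v, c_k) + 1 ≤ dist(v, c_l) + 1 for all 1 ≤ l ≤ n. That is, δᵢ(v) = δⱼ(v) = Δ_k(v) ≤ Δ_l(v) for all l, where δᵢ(x) = dist(x,cᵢ) − 1 and Δᵢ(x) = dist(x,cᵢ) + 1. -/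
lemma dist_pt (a b a' b' : ℝ) :
    dist (pt a b) (pt a' b') = Real.sqrt ((a - a') ^ 2 + (b - b') ^ 2) := by
  rw [EuclideanSpace.dist_eq]
  simp [pt, Fin.sum_univ_two, Real.dist_eq, sq_abs]

theorem quadratic_lower_bound_witness (m : ℕ) (hm : 0 < m)
    (c : ℕ → EuclideanSpace ℝ (Fin 2))
    (hc : ∀ i, c i = pt (4 * ((i : ℝ) - m) - 2) 0)
    (i j k : ℕ) (hi : 1 ≤ i) (hij : i < j) (hjn : j ≤ 2 * m)
    (hgap : 2 ≤ j - i) (heven : Even (i + j)) (hk : k = (i + j) / 2)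
    (v : EuclideanSpace ℝ (Fin 2))
    (hv : v = pt (2 * ((i : ℝ) + j - 2 * m - 1)) (((j : ℝ) - i) ^ 2 - 1)) :
    dist v (c i) - 1 = dist v (c j) - 1 ∧
    dist v (c i) - 1 = dist v (c k) + 1 ∧
    ∀ l, 1 ≤ l → l ≤ 2 * m → dist v (c k) + 1 ≤ dist v (c l) + 1 := by
  have h2k : 2 * k = i + j := by
    obtain ⟨r, hr⟩ := heven
    omega
  have hkR : (k : ℝ) = ((i : ℝ) + j) / 2 := by
    have := congrArg (fun n : ℕ => (n : ℝ)) h2k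
    push_cast at this
    linarith
  set s : ℝ := (j : ℝ) - i with hs
  have hs2 : (2 : ℝ) ≤ s := by
    have : i + 2 ≤ j := by omega
    have := (Nat.cast_le (α := ℝ)).2 this
    push_cast at this
    linarith
  have hs1 : (1 : ℝ) ≤ s ^ 2 := by nlinarith
  have hdi : dist v (c i) = s ^ 2 + 1 := by
    rw [hv, hc, dist_pt]
    have : (2 * ((i : ℝ) + j - 2 * m - 1) - (4 * ((i : ℝ) - m) - 2)) ^ 2 +
        (((j : ℝ) - i) ^ 2 - 1 - 0) ^ 2 = (s ^ 2 + 1) ^ 2 := by ring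
    rw [this, Real.sqrt_sq (by nlinarith)]
  have hdj : dist v (c j) = s ^ 2 + 1 := by
    rw [hv, hc, dist_pt]
    have : (2 * ((i : ℝ) + j - 2 * m - 1) - (4 * ((j : ℝ) - m) - 2)) ^ 2 +
        (((j : ℝ) - i) ^ 2 - 1 - 0) ^ 2 = (s ^ 2 + 1) ^ 2 := by ring
    rw [this, Real.sqrt_sq (by nlinarith)]
  have hdk : dist v (c k) = s ^ 2 - 1 := by
    rw [hv, hc, dist_pt, hkR]
    have : (2 * ((i : ℝ) + j - 2 * m - 1) - (4 * (((i : ℝ) + j) / 2 - m) - 2)) ^ 2 +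
        (((j : ℝ) - i) ^ 2 - 1 - 0) ^ 2 = (s ^ 2 - 1) ^ 2 := by ring
    rw [this, Real.sqrt_sq (by nlinarith)]
  refine ⟨by rw [hdi, hdj], by rw [hdi, hdk]; ring, ?_⟩
  intro l _ _
  rw [hdk, hv, hc, dist_pt]
  have hle : (s ^ 2 - 1) ^ 2 ≤ (2 * ((i : ℝ) + j - 2 * m - 1) - (4 * ((l : ℝ) - m) - 2)) ^ 2 +
      (((j : ℝ) - i) ^ 2 - 1 - 0) ^ 2 := by
    rw [← hs]
    nlinarith [sq_nonneg (2 * ((i : ℝ) + j - 2 * m - 1) - (4 * ((l : ℝ) - m) - 2))]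
  have := Real.sqrt_le_sqrt hle
  rw [Real.sqrt_sq (by nlinarith)] at this
  linarith
end
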